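/- For m a positive integer and R ≥ m real, ∑_{k=1}^{m}(R² − k²)^{1/2} ≤ (π/4)R² − (1/2)R + (√6/9)√(m + 1/2), where m = ⌊R⌋. In particular ∑_{k=1}^{⌊R⌋}(R² − k²)^{1/2} ≤ (π/4)R² − R/6. -/

import Mathlib

/-!
The function `f x = √(R² - x²)` is concave on `[0, R]`, so on every interval `[k - 1, k]` with
`k ≤ m` and on `[m, R]` its integral dominates the trapezoid under its chord. These trapezoids fit
inside the quarter disc of area `π R² / 4`, which leaves the error term `f m (1 - δ) / 2` with
`δ = R - m`. Since `f m ² = δ (R + m) ≤ δ (2m + 1)` and `δ (1 - δ)² ≤ 4 / 27`, this error is at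
most `√((2m + 1) / 27) = (√6 / 9) √(m + 1/2)`, which in turn is at most `R / 3`.
-/

open Real Set intervalIntegral

theorem ConcaveOn.trapezoid_le_integral {f : ℝ → ℝ} {a b : ℝ} (hab : a ≤ b)
    (hf : ConcaveOn ℝ (Icc a b) f) (hc : ContinuousOn f (Icc a b)) :
    (b - a) * (f a + f b) / 2 ≤ ∫ x in a..b, f x := by
  have hmaps : MapsTo (fun t : ℝ => a + (b - a) * t) (Icc 0 1) (Icc a b) := fun t ⟨h0, h1⟩ =>
    ⟨by nlinarith, by nlinarith⟩
  have hchord : ∀ t ∈ Icc (0 : ℝ) 1, f a + t * (f b - f a) ≤ f (a + (b - a) * t) :=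
    fun t ⟨h0, h1⟩ => by
      have := hf.2 (left_mem_Icc.2 hab) (right_mem_Icc.2 hab) (sub_nonneg.2 h1) h0
        (sub_add_cancel 1 t)
      simp only [smul_eq_mul] at this
      rw [show (1 - t) * a + t * b = a + (b - a) * t by ring] at this
      linarith
  have hchord_int : ∫ t in (0 : ℝ)..1, f a + t * (f b - f a) = (f a + f b) / 2 := by
    rw [integral_add intervalIntegrable_const (intervalIntegrable_id.mul_const _),
      integral_const, integral_mul_const, integral_id]
    simp only [smul_eq_mul]
    ring
  have hmono :
      ∫ t in (0 : ℝ)..1, f a + t * (f b - f a) ≤ ∫ t in (0 : ℝ)..1, f (a + (b - a) * t) :=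
    integral_mono_on zero_le_one
      ((by fun_prop : Continuous fun t : ℝ => f a + t * (f b - f a)).intervalIntegrable 0 1)
      ((hc.comp (by fun_prop) hmaps).intervalIntegrable_of_Icc zero_le_one) hchord
  have hsubst := smul_integral_comp_add_mul (a := 0) (b := 1) f (b - a) a
  simp only [mul_zero, add_zero, mul_one, add_sub_cancel, smul_eq_mul] at hsubst
  calc (b - a) * (f a + f b) / 2 = (b - a) * ∫ t in (0 : ℝ)..1, f a + t * (f b - f a) := by
        rw [hchord_int]; ring
    _ ≤ (b - a) * ∫ t in (0 : ℝ)..1, f (a + (b - a) * t) := by gcongr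
    _ = ∫ x in a..b, f x := hsubst

theorem ConcaveOn.sum_Icc_add_le_integral {f : ℝ → ℝ} {n : ℕ}
    (hf : ConcaveOn ℝ (Icc (0 : ℝ) n) f) (hc : ContinuousOn f (Icc (0 : ℝ) n)) :
    ∑ k ∈ Finset.Icc 1 n, f k + (f 0 - f n) / 2 ≤ ∫ x in (0 : ℝ)..n, f x := by
  induction n with
  | zero => simp
  | succ n ih =>
    push_cast at hf hc ⊢
    have hleft : Icc (0 : ℝ) n ⊆ Icc 0 (n + 1) := Icc_subset_Icc_right (by linarith)
    have hright : Icc (n : ℝ) (n + 1) ⊆ Icc 0 (n + 1) := Icc_subset_Icc_left n.cast_nonneg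
    have hsum := ih (hf.subset hleft (convex_Icc _ _)) (hc.mono hleft)
    have hlast := (hf.subset hright (convex_Icc _ _)).trapezoid_le_integral (by linarith)
      (hc.mono hright)
    rw [Finset.sum_Icc_succ_top (by omega), ← integral_add_adjacent_intervals
      ((hc.mono hleft).intervalIntegrable_of_Icc n.cast_nonneg)
      ((hc.mono hright).intervalIntegrable_of_Icc (by linarith))]
    push_cast
    linarith

theorem concaveOn_sqrt_sq_sub_sq (r : ℝ) :
    ConcaveOn ℝ (Icc (-r) r) fun x => √(r ^ 2 - x ^ 2) := by
  refine ⟨convex_Icc _ _, fun x ⟨hx₁, hx₂⟩ y ⟨hy₁, hy₂⟩ a b ha hb hab => ?_⟩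
  have hx : 0 ≤ r ^ 2 - x ^ 2 := sub_nonneg.2 (sq_le_sq' hx₁ hx₂)
  have hy : 0 ≤ r ^ 2 - y ^ 2 := sub_nonneg.2 (sq_le_sq' hy₁ hy₂)
  simp only [smul_eq_mul]
  calc a * √(r ^ 2 - x ^ 2) + b * √(r ^ 2 - y ^ 2)
      ≤ √(a * (r ^ 2 - x ^ 2) + b * (r ^ 2 - y ^ 2)) :=
        strictConcaveOn_sqrt.concaveOn.2 hx hy ha hb hab
    _ ≤ √(r ^ 2 - (a * x + b * y) ^ 2) := by
        gcongr
        rw [← sub_nonneg]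
        have hgap : r ^ 2 - (a * x + b * y) ^ 2 - (a * (r ^ 2 - x ^ 2) + b * (r ^ 2 - y ^ 2))
            = a * b * (x - y) ^ 2 := by
          obtain rfl : b = 1 - a := by linarith
          ring
        rw [hgap]
        positivity

theorem integral_sqrt_sq_sub_sq {r : ℝ} (hr : 0 ≤ r) :
    ∫ x in (0 : ℝ)..r, √(r ^ 2 - x ^ 2) = π / 4 * r ^ 2 := by
  have hsqrt : ∀ θ ∈ uIcc 0 (π / 2),
      √(r ^ 2 - (r * sin θ) ^ 2) * (r * cos θ) = r ^ 2 * cos θ ^ 2 := by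
    intro θ hθ
    rw [uIcc_of_le (by positivity)] at hθ
    have hcos : 0 ≤ cos θ := cos_nonneg_of_mem_Icc ⟨by linarith [hθ.1, pi_pos], hθ.2⟩
    rw [show r ^ 2 - (r * sin θ) ^ 2 = (r * cos θ) ^ 2 by
      linear_combination (-r ^ 2) * sin_sq_add_cos_sq θ,
      sqrt_sq (by positivity)]
    ring
  calc ∫ x in (0 : ℝ)..r, √(r ^ 2 - x ^ 2)
      = ∫ x in r * sin 0..r * sin (π / 2), √(r ^ 2 - x ^ 2) := by simp
    _ = ∫ θ in (0 : ℝ)..π / 2, √(r ^ 2 - (r * sin θ) ^ 2) * (r * cos θ) :=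
        (integral_comp_mul_deriv (fun θ _ => (hasDerivAt_sin θ).const_mul r) (by fun_prop)
          (by fun_prop)).symm
    _ = ∫ θ in (0 : ℝ)..π / 2, r ^ 2 * cos θ ^ 2 := integral_congr hsqrt
    _ = π / 4 * r ^ 2 := by
        simp only [integral_const_mul, integral_cos_sq, cos_pi_div_two, sin_pi_div_two, cos_zero,
          sin_zero]
        ring

theorem sqrt_six_div_nine_mul_sqrt (x : ℝ) : √6 / 9 * √(x + 1 / 2) = √((2 * x + 1) / 27) := by
  rw [show (2 * x + 1) / 27 = 6 / 9 ^ 2 * (x + 1 / 2) by ring, sqrt_mul (by positivity),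
    sqrt_div' _ (by positivity), sqrt_sq (by norm_num)]

theorem sqrt_sq_sub_sq_mul_one_sub_le {x r : ℝ} (hx : 0 ≤ x) (hxr : x ≤ r) (hrx : r ≤ x + 1) :
    √(r ^ 2 - x ^ 2) * (1 - (r - x)) / 2 ≤ √((2 * x + 1) / 27) := by
  -- `δ (1 - δ)²` attains its maximum `4 / 27` on `[0, 1]` at `δ = 1 / 3`
  have hcubic : (r - x) * (1 - (r - x)) ^ 2 ≤ 4 / 27 := by
    nlinarith [mul_nonneg (sq_nonneg (3 * (r - x) - 1)) (by linarith : 0 ≤ 4 - 3 * (r - x))]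
  apply le_sqrt_of_sq_le
  rw [div_pow, mul_pow, sq_sqrt (by nlinarith)]
  nlinarith

/-- For real `R ≥ 1` and `m = ⌊R⌋`:
`∑_{k=1}^{m} √(R² - k²) ≤ (π/4)R² - R/2 + (√6/9)√(m + 1/2)`, and in particular
`∑_{k=1}^{⌊R⌋} √(R² - k²) ≤ (π/4)R² - R/6`. -/
theorem quarter_disc_sum_upper (R : ℝ) (hR : 1 ≤ R) :
    (∑ k ∈ Finset.Icc 1 ⌊R⌋₊, Real.sqrt (R ^ 2 - (k : ℝ) ^ 2) ≤
        π / 4 * R ^ 2 - R / 2 + Real.sqrt 6 / 9 * Real.sqrt ((⌊R⌋₊ : ℝ) + 1 / 2)) ∧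
      ∑ k ∈ Finset.Icc 1 ⌊R⌋₊, Real.sqrt (R ^ 2 - (k : ℝ) ^ 2) ≤
        π / 4 * R ^ 2 - R / 6 := by
  set m := ⌊R⌋₊
  set f : ℝ → ℝ := fun x => √(R ^ 2 - x ^ 2)
  have hmR : (m : ℝ) ≤ R := Nat.floor_le (by linarith)
  have hconc : ConcaveOn ℝ (Icc 0 R) f :=
    (concaveOn_sqrt_sq_sub_sq R).subset (Icc_subset_Icc_left (by linarith)) (convex_Icc _ _)
  have hcont : ContinuousOn f (Icc 0 R) := by fun_prop
  have hleft : Icc (0 : ℝ) m ⊆ Icc 0 R := Icc_subset_Icc_right hmR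
  have hright : Icc (m : ℝ) R ⊆ Icc 0 R := Icc_subset_Icc_left m.cast_nonneg
  have hsum := (hconc.subset hleft (convex_Icc _ _)).sum_Icc_add_le_integral (hcont.mono hleft)
  have htail :=
    (hconc.subset hright (convex_Icc _ _)).trapezoid_le_integral hmR (hcont.mono hright)
  have harea : (∫ x in (0 : ℝ)..m, f x) + ∫ x in (m : ℝ)..R, f x = π / 4 * R ^ 2 := by
    rw [integral_add_adjacent_intervals
      ((hcont.mono hleft).intervalIntegrable_of_Icc m.cast_nonneg)
      ((hcont.mono hright).intervalIntegrable_of_Icc hmR)]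
    exact integral_sqrt_sq_sub_sq (by linarith)
  have hf0 : f 0 = R := by simp [f, sqrt_sq (by linarith : 0 ≤ R)]
  have hfR : f R = 0 := by simp [f]
  have hmain :
      ∑ k ∈ Finset.Icc 1 m, f k ≤ π / 4 * R ^ 2 - R / 2 + f m * (1 - (R - m)) / 2 := by
    rw [hf0] at hsum
    rw [hfR] at htail
    linarith
  have hcorner : f m * (1 - (R - m)) / 2 ≤ √((2 * m + 1) / 27) :=
    sqrt_sq_sub_sq_mul_one_sub_le m.cast_nonneg hmR (Nat.lt_floor_add_one R).le
  have hsqrt : √((2 * m + 1) / 27) ≤ R / 3 := sqrt_le_iff.2 ⟨by linarith, by nlinarith⟩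
  rw [sqrt_six_div_nine_mul_sqrt]
  exact ⟨hmain.trans (by linarith), hmain.trans (by linarith)⟩
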